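/- arXiv:0808.2578 — 4 statements merged into one kernel-verified Lean document; each statement's English description precedes it below -/
import Mathlib

section
/- If A is a square complex matrix and there exists an invertible matrix Q such that the operator norm of Q⁻¹AQ is strictly less than 1, then for every complex matrix Δ with operator norm at most 1 that commutes with Q, the matrix I - ΔA is invertible. -/
open Matrix
open scoped Matrix.Norms.L2Operator

/-!
Conjugation by `Q` turns `1 - Δ A` into `1 - Q⁻¹ Δ A Q = 1 - Δ (Q⁻¹ A Q)`, since `Δ` commutes
with `Q`. Submultiplicativity of the operator norm gives `‖Δ (Q⁻¹ A Q)‖ ≤ ‖Q⁻¹ A Q‖ < 1`, so this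
matrix is invertible by the Neumann series, and so is its conjugate `1 - Δ A`.
-/

theorem Units.isUnit_one_sub_conj_iff {R : Type*} [Ring R] (u : Rˣ) (x : R) :
    IsUnit (1 - ↑u⁻¹ * x * ↑u) ↔ IsUnit (1 - x) := by
  have hconj : 1 - ↑u⁻¹ * x * ↑u = ↑u⁻¹ * (1 - x) * ↑u := by
    rw [mul_sub, sub_mul, mul_one, Units.inv_mul]
  rw [hconj, Units.isUnit_mul_units, Units.isUnit_units_mul]

theorem Units.conj_mul_of_commute {M : Type*} [Monoid M] (u : Mˣ) {d : M} (a : M)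
    (h : Commute d u) : ↑u⁻¹ * (d * a) * ↑u = d * (↑u⁻¹ * a * ↑u) := by
  rw [← mul_assoc, ← h.units_inv_right.eq]
  simp only [mul_assoc]

theorem isUnit_one_sub_of_norm_conj_lt_one {R : Type*} [NormedRing R] [HasSummableGeomSeries R]
    (u : Rˣ) {x : R} (h : ‖↑u⁻¹ * x * ↑u‖ < 1) : IsUnit (1 - x) :=
  (u.isUnit_one_sub_conj_iff x).mp (isUnit_one_sub_of_norm_lt_one h)

/-- Q-stability implies robust stability: if `‖Q⁻¹ A Q‖ < 1` for some invertible `Q`,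
then `I - Δ A` is invertible for every contraction `Δ` commuting with `Q`. -/
theorem qStable_implies_robustStable {n : ℕ} (A Q : Matrix (Fin n) (Fin n) ℂ)
    (hQ : IsUnit Q) (hnorm : ‖Q⁻¹ * A * Q‖ < 1) :
    ∀ Δ : Matrix (Fin n) (Fin n) ℂ, ‖Δ‖ ≤ 1 → Δ * Q = Q * Δ →
      IsUnit (1 - Δ * A) := by
  intro Δ hΔ hcomm
  lift Q to (Matrix (Fin n) (Fin n) ℂ)ˣ using hQ
  rw [← Matrix.coe_units_inv] at hnorm
  refine isUnit_one_sub_of_norm_conj_lt_one Q ?_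
  rw [Q.conj_mul_of_commute A hcomm]
  calc ‖Δ * (↑Q⁻¹ * A * ↑Q)‖ ≤ ‖Δ‖ * ‖↑Q⁻¹ * A * ↑Q‖ := norm_mul_le _ _
    _ < 1 := mul_lt_one_of_nonneg_of_lt_one_right hΔ (norm_nonneg _) hnorm
end

section
/- If X is a positive definite Hermitian matrix satisfying A X A* - X < 0, then the spectral radius of A is strictly less than 1. -/
open Matrix
open scoped ComplexOrder

/-!
If `μ` is an eigenvalue of `A`, then `conj μ` is an eigenvalue of `Aᴴ`; for a corresponding
eigenvector `v`, the quadratic form of `X - A X Aᴴ` at `v` is `(1 - |μ|²) ⟪v, X v⟫`. Both this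
and `⟪v, X v⟫` are positive, so `|μ| < 1`.
-/

namespace Matrix

variable {ι K : Type*} [Fintype ι]

theorem exists_conjTranspose_mulVec_eq_star_smul_of_mem_spectrum [DecidableEq ι] [Field K]
    [StarRing K] {A : Matrix ι ι K} {μ : K} (hμ : μ ∈ spectrum K A) :
    ∃ v ≠ 0, Aᴴ *ᵥ v = star μ • v := by
  have hμH : star μ ∈ spectrum K Aᴴ := by
    rwa [← star_eq_conjTranspose, spectrum.map_star, Set.star_mem_star]
  rw [← spectrum_toLin', ← Module.End.hasEigenvalue_iff_mem_spectrum] at hμH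
  obtain ⟨v, hv⟩ := hμH.exists_hasEigenvector
  exact ⟨v, hv.2, hv.apply_eq_smul⟩

theorem star_dotProduct_mul_mul_conjTranspose_mulVec [CommRing K] [StarRing K]
    {A X : Matrix ι ι K} {v : ι → K} {c : K} (hv : Aᴴ *ᵥ v = c • v) :
    star v ⬝ᵥ (A * X * Aᴴ) *ᵥ v = star c * c * (star v ⬝ᵥ X *ᵥ v) := by
  have hstar : star v ᵥ* A = star (Aᴴ *ᵥ v) := by
    rw [star_mulVec, conjTranspose_conjTranspose]
  rw [← mulVec_mulVec, ← mulVec_mulVec, dotProduct_mulVec, hstar, hv]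
  simp only [mulVec_smul, dotProduct_smul, star_smul, smul_dotProduct, smul_eq_mul]
  ring

theorem norm_lt_one_of_conjTranspose_mulVec_eq_smul [RCLike K] {A X : Matrix ι ι K}
    (hX : X.PosDef) (hLMI : (X - A * X * Aᴴ).PosDef) {v : ι → K} (hv0 : v ≠ 0) {c : K}
    (hv : Aᴴ *ᵥ v = c • v) : ‖c‖ < 1 := by
  have hXv := hX.dotProduct_mulVec_pos hv0
  have hdiff := hLMI.dotProduct_mulVec_pos hv0
  rw [sub_mulVec, dotProduct_sub, star_dotProduct_mul_mul_conjTranspose_mulVec hv,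
    ← one_sub_mul, RCLike.star_def, RCLike.conj_mul] at hdiff
  rw [RCLike.pos_iff] at hXv hdiff
  have hcast : (1 - (‖c‖ : K) ^ 2) = ((1 - ‖c‖ ^ 2 : ℝ) : K) := by push_cast; rfl
  rw [hcast, RCLike.re_ofReal_mul] at hdiff
  have hgap : 0 < 1 - ‖c‖ ^ 2 := (pos_iff_pos_of_mul_pos hdiff.1).mpr hXv.1
  exact (sq_lt_one_iff₀ (norm_nonneg c)).mp (by linarith)

end Matrix

/-- If `X > 0` and `A X A* - X < 0`, then every eigenvalue of `A` has modulus
strictly less than 1 (the spectral radius of `A` is `< 1`). -/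
theorem spectralRadius_lt_one_of_LMI {n : ℕ} (A X : Matrix (Fin n) (Fin n) ℂ)
    (hX : X.PosDef) (hLMI : (X - A * X * Aᴴ).PosDef) :
    ∀ μ ∈ spectrum ℂ A, ‖μ‖ < 1 := by
  intro μ hμ
  obtain ⟨v, hv0, hv⟩ := exists_conjTranspose_mulVec_eq_star_smul_of_mem_spectrum hμ
  simpa using norm_lt_one_of_conjTranspose_mulVec_eq_smul hX hLMI hv0 hv
end

section
/- Let M = [[A, B],[C, D]] be a block operator matrix with ‖M‖ < 1. Then ‖A‖ < 1, and moreover for every Δ with ‖Δ‖ ≤ 1, the matrix I - ΔA is invertible and ‖D + C(I - ΔA)⁻¹ΔB‖ < 1. -/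
/-!
Write `e = A x + B u` and `y = C x + D u`. Since `M` is a contraction,
`‖e‖² + ‖y‖² ≤ ‖M‖² (‖x‖² + ‖u‖²)`. Taking `u = 0` gives `‖A‖ ≤ ‖M‖ < 1`, so `‖ΔA‖ < 1` and
`I - ΔA` is invertible by the Neumann series. For `x = (I - ΔA)⁻¹ Δ B u` the loop closes,
`x = Δ e`, and `y = F_u(M, Δ) u`; as `‖x‖ ≤ ‖e‖` this gives
`‖y‖² ≤ ‖M‖² ‖u‖² + (‖M‖² - 1) ‖x‖² ≤ ‖M‖² ‖u‖²`.
-/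

open Matrix WithLp
open scoped Matrix.Norms.L2Operator

namespace Matrix

variable {m n p q : Type*}

lemma inv_one_sub_mul_mul_eq {R : Type*} [CommRing R] [Fintype m] [Fintype n] [DecidableEq n]
    {A : Matrix m n R} {B : Matrix m q R} {Δ : Matrix n m R} (h : IsUnit (1 - Δ * A)) :
    (1 - Δ * A)⁻¹ * Δ * B = Δ * (A * ((1 - Δ * A)⁻¹ * Δ * B) + B) := by
  set K := (1 - Δ * A)⁻¹ * Δ * B
  have hK : (1 - Δ * A) * K = Δ * B := by
    simp only [K, ← Matrix.mul_assoc, mul_nonsing_inv _ ((isUnit_iff_isUnit_det _).mp h),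
      Matrix.one_mul]
  rw [Matrix.mul_add, ← Matrix.mul_assoc, ← hK, Matrix.sub_mul, Matrix.one_mul, add_sub_cancel]

variable {𝕜 : Type*} [RCLike 𝕜] [Fintype m] [Fintype n] [Fintype p] [Fintype q]

lemma norm_toLp_sumElim_sq (x : m → 𝕜) (y : n → 𝕜) :
    ‖toLp 2 (x ⊕ᵥ y)‖ ^ 2 = ‖toLp 2 x‖ ^ 2 + ‖toLp 2 y‖ ^ 2 := by
  simp only [EuclideanSpace.norm_sq_eq, Fintype.sum_sum_type, Sum.elim_inl, Sum.elim_inr]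

variable [DecidableEq n] [DecidableEq q]

lemma norm_toLp_mulVec_le (A : Matrix m n 𝕜) (x : n → 𝕜) :
    ‖toLp 2 (A *ᵥ x)‖ ≤ ‖A‖ * ‖toLp 2 x‖ :=
  A.l2_opNorm_mulVec (toLp 2 x)

lemma l2_opNorm_le_of_mulVec_le {A : Matrix m n 𝕜} {c : ℝ} (hc : 0 ≤ c)
    (h : ∀ x : n → 𝕜, ‖toLp 2 (A *ᵥ x)‖ ≤ c * ‖toLp 2 x‖) : ‖A‖ ≤ c :=
  ContinuousLinearMap.opNorm_le_bound _ hc fun x => h x.ofLp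

lemma norm_sq_add_norm_sq_le_fromBlocks (A : Matrix m n 𝕜) (B : Matrix m q 𝕜)
    (C : Matrix p n 𝕜) (D : Matrix p q 𝕜) (x : n → 𝕜) (u : q → 𝕜) :
    ‖toLp 2 (A *ᵥ x + B *ᵥ u)‖ ^ 2 + ‖toLp 2 (C *ᵥ x + D *ᵥ u)‖ ^ 2 ≤
      ‖fromBlocks A B C D‖ ^ 2 * (‖toLp 2 x‖ ^ 2 + ‖toLp 2 u‖ ^ 2) := by
  have h := norm_toLp_mulVec_le (fromBlocks A B C D) (x ⊕ᵥ u)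
  rw [fromBlocks_mulVec, Sum.elim_comp_inl, Sum.elim_comp_inr] at h
  rw [← norm_toLp_sumElim_sq, ← norm_toLp_sumElim_sq, ← mul_pow]
  exact pow_le_pow_left₀ (norm_nonneg _) h 2

lemma l2_opNorm_le_fromBlocks₁₁ (A : Matrix m n 𝕜) (B : Matrix m q 𝕜)
    (C : Matrix p n 𝕜) (D : Matrix p q 𝕜) : ‖A‖ ≤ ‖fromBlocks A B C D‖ := by
  refine l2_opNorm_le_of_mulVec_le (norm_nonneg _) fun x => ?_
  have h := norm_sq_add_norm_sq_le_fromBlocks A B C D x 0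
  simp only [mulVec_zero, add_zero, toLp_zero, norm_zero] at h
  refine pow_le_pow_iff_left₀ (norm_nonneg _) (by positivity) two_ne_zero |>.mp ?_
  nlinarith [sq_nonneg ‖toLp 2 (C *ᵥ x)‖]

variable [DecidableEq m] {A : Matrix m n 𝕜} {B : Matrix m q 𝕜} {C : Matrix p n 𝕜}
  {D : Matrix p q 𝕜} {Δ : Matrix n m 𝕜}

lemma norm_toLp_feedback_output_le (hM : ‖fromBlocks A B C D‖ ≤ 1) (hΔ : ‖Δ‖ ≤ 1)
    {x : n → 𝕜} {u : q → 𝕜} (hx : x = Δ *ᵥ (A *ᵥ x + B *ᵥ u)) :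
    ‖toLp 2 (C *ᵥ x + D *ᵥ u)‖ ≤ ‖fromBlocks A B C D‖ * ‖toLp 2 u‖ := by
  have hxe : ‖toLp 2 x‖ ≤ ‖toLp 2 (A *ᵥ x + B *ᵥ u)‖ := by
    conv_lhs => rw [hx]
    exact (norm_toLp_mulVec_le _ _).trans (mul_le_of_le_one_left (norm_nonneg _) hΔ)
  have hM2 : ‖fromBlocks A B C D‖ ^ 2 ≤ 1 := pow_le_one₀ (norm_nonneg _) hM
  have hquad := norm_sq_add_norm_sq_le_fromBlocks A B C D x u
  refine pow_le_pow_iff_left₀ (norm_nonneg _) (by positivity) two_ne_zero |>.mp ?_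
  nlinarith [pow_le_pow_left₀ (norm_nonneg _) hxe 2, sq_nonneg ‖toLp 2 x‖]

lemma l2_opNorm_upperLFT_le (hM : ‖fromBlocks A B C D‖ ≤ 1) (hΔ : ‖Δ‖ ≤ 1)
    (h : IsUnit (1 - Δ * A)) :
    ‖D + C * (1 - Δ * A)⁻¹ * Δ * B‖ ≤ ‖fromBlocks A B C D‖ := by
  refine l2_opNorm_le_of_mulVec_le (norm_nonneg _) fun u => ?_
  have hCK : C * (1 - Δ * A)⁻¹ * Δ * B = C * ((1 - Δ * A)⁻¹ * Δ * B) := by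
    simp only [Matrix.mul_assoc]
  rw [hCK, add_mulVec, ← mulVec_mulVec, add_comm]
  refine norm_toLp_feedback_output_le hM hΔ ?_
  simpa only [← mulVec_mulVec, add_mulVec] using
    congrArg (· *ᵥ u) (inv_one_sub_mul_mul_eq (B := B) h)

end Matrix

theorem mainLoop_contractive_general {X U Y : Type*} [Fintype X] [Fintype U] [Fintype Y]
    [DecidableEq X] [DecidableEq U]
    (A : Matrix X X ℂ) (B : Matrix X U ℂ) (C : Matrix Y X ℂ) (D : Matrix Y U ℂ)
    (hM : ‖Matrix.fromBlocks A B C D‖ < 1) :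
    ‖A‖ < 1 ∧ ∀ Δ : Matrix X X ℂ, ‖Δ‖ ≤ 1 →
      IsUnit (1 - Δ * A) ∧ ‖D + C * (1 - Δ * A)⁻¹ * Δ * B‖ < 1 := by
  have hA : ‖A‖ < 1 := (l2_opNorm_le_fromBlocks₁₁ A B C D).trans_lt hM
  refine ⟨hA, fun Δ hΔ => ?_⟩
  have hΔA : ‖Δ * A‖ < 1 :=
    (l2_opNorm_mul Δ A).trans_lt (mul_lt_one_of_nonneg_of_lt_one_right hΔ (norm_nonneg A) hA)
  have hunit : IsUnit (1 - Δ * A) := isUnit_one_sub_of_norm_lt_one hΔA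
  exact ⟨hunit, (l2_opNorm_upperLFT_le hM.le hΔ hunit).trans_lt hM⟩

/-- Contractivity version of the Main Loop theorem: if the block matrix
`M = [[A, B], [C, D]]` is a strict contraction, then `‖A‖ < 1`, and for every
contraction `Δ` the matrix `I - ΔA` is invertible and the upper linear fractional
transformation `F_u(M, Δ) = D + C (I - ΔA)⁻¹ Δ B` is a strict contraction. -/
theorem mainLoop_contractive {X U Y : Type*} [Fintype X] [Fintype U] [Fintype Y]
    [DecidableEq X] [DecidableEq U] [DecidableEq Y]
    (A : Matrix X X ℂ) (B : Matrix X U ℂ) (C : Matrix Y X ℂ) (D : Matrix Y U ℂ)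
    (hM : ‖Matrix.fromBlocks A B C D‖ < 1) :
    ‖A‖ < 1 ∧ ∀ Δ : Matrix X X ℂ, ‖Δ‖ ≤ 1 →
      IsUnit (1 - Δ * A) ∧ ‖D + C * (1 - Δ * A)⁻¹ * Δ * B‖ < 1 :=
  mainLoop_contractive_general A B C D hM
end

section
/- Let X and Y be positive definite Hermitian matrices satisfying the strict homogeneous matrix inequalities B⊥* (A Y A* - Y) B⊥ < 0 and C⊥ (A* X A - X) C⊥* < 0. Then for all sufficiently large μ > 0, the matrices X̃ = μX and Ỹ = μY still satisfy the same two inequalities and additionally satisfy [[X̃, I],[I, Ỹ]] ≥ 0. -/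
/-!
Both LMIs are homogeneous in `(X, Y)`, so they survive rescaling by any `μ > 0`. For the coupling
condition, positive definiteness gives `c > 0` with `X, Y ≥ c • 1`, so `μ X - 1` and `μ Y - 1` are
positive semidefinite once `μ ≥ c⁻¹`; and then
`[[μX, 1], [1, μY]] = diag (μX - 1, μY - 1) + [[1, 1], [1, 1]]`,
where the last matrix is `Gᴴ G` for `G = [[1, 1], [0, 0]]`.
-/

open Matrix Filter
open scoped ComplexOrder

namespace Matrix

variable {𝕜 : Type*} [RCLike 𝕜] {n : Type*} [Fintype n]

open scoped MatrixOrder in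
theorem PosDef.exists_pos_posSemidef_sub_smul_one [DecidableEq n] {X : Matrix n n 𝕜}
    (hX : X.PosDef) : ∃ c : ℝ, 0 < c ∧ (X - (c : 𝕜) • 1).PosSemidef := by
  rcases subsingleton_or_nontrivial (Matrix n n 𝕜) with _ | _
  · exact ⟨1, one_pos, by simpa [Subsingleton.elim (X - _) 0] using PosSemidef.zero⟩
  obtain ⟨c, hc, hcX⟩ := (CFC.exists_pos_algebraMap_le_iff hX.isHermitian).2
    fun _ hx => hX.isStrictlyPositive.spectrum_pos hx
  refine ⟨c, hc, ?_⟩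
  rwa [Matrix.le_iff, Algebra.algebraMap_eq_smul_one, RCLike.real_smul_eq_coe_smul (K := 𝕜)]
    at hcX

theorem PosDef.eventually_posSemidef_smul_sub_one [DecidableEq n] {X : Matrix n n 𝕜}
    (hX : X.PosDef) : ∀ᶠ μ : ℝ in atTop, ((μ : 𝕜) • X - 1).PosSemidef := by
  obtain ⟨c, hc, hcX⟩ := hX.exists_pos_posSemidef_sub_smul_one
  filter_upwards [eventually_ge_atTop c⁻¹] with μ hμ
  have hμc : 1 ≤ μ * c := by rwa [inv_le_iff_one_le_mul₀ hc] at hμ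
  have hμ : 0 ≤ μ := (inv_pos.2 hc).le.trans hμ
  have split : (μ : 𝕜) • X - 1 = (μ : 𝕜) • (X - (c : 𝕜) • 1) + ((μ * c - 1 : ℝ) : 𝕜) • 1 := by
    push_cast
    module
  rw [split]
  exact (hcX.smul (RCLike.ofReal_nonneg.2 hμ)).add
    (PosSemidef.one.smul (RCLike.ofReal_nonneg.2 (sub_nonneg.2 hμc)))

theorem PosSemidef.fromBlocks_zero {m : Type*} [Fintype m] {P : Matrix m m 𝕜}
    {Q : Matrix n n 𝕜} (hP : P.PosSemidef) (hQ : Q.PosSemidef) :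
    (fromBlocks P 0 0 Q).PosSemidef := by
  refine .of_dotProduct_mulVec_nonneg
    (hP.isHermitian.fromBlocks (by simp) hQ.isHermitian) fun x => ?_
  obtain ⟨u, v, rfl⟩ : ∃ u v, x = Sum.elim u v := ⟨_, _, (Sum.elim_comp_inl_inr x).symm⟩
  simp only [fromBlocks_mulVec, Sum.elim_comp_inl, Sum.elim_comp_inr, zero_mulVec, add_zero,
    zero_add, Function.star_sumElim, sumElim_dotProduct_sumElim]
  exact add_nonneg (hP.dotProduct_mulVec_nonneg u) (hQ.dotProduct_mulVec_nonneg v)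

theorem posSemidef_fromBlocks_one_one [DecidableEq n] {X Y : Matrix n n 𝕜}
    (hX : (X - 1).PosSemidef) (hY : (Y - 1).PosSemidef) :
    (fromBlocks X 1 1 Y).PosSemidef := by
  have split : fromBlocks X 1 1 Y = fromBlocks (X - 1) 0 0 (Y - 1) +
      (fromBlocks (1 : Matrix n n 𝕜) 1 0 0)ᴴ * fromBlocks 1 1 0 0 := by
    simp [fromBlocks_conjTranspose, fromBlocks_multiply, fromBlocks_add]
  rw [split]
  exact (hX.fromBlocks_zero hY).add (posSemidef_conjTranspose_mul_self _)

end Matrix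

theorem coupling_by_rescaling_general {n p q : ℕ} (A X Y : Matrix (Fin n) (Fin n) ℂ)
    (Bperp : Matrix (Fin n) (Fin p) ℂ) (Cperp : Matrix (Fin q) (Fin n) ℂ)
    (hX : X.PosDef) (hY : Y.PosDef)
    (hLMI_Y : (-(Bperpᴴ * (A * Y * Aᴴ - Y) * Bperp)).PosDef)
    (hLMI_X : (-(Cperp * (Aᴴ * X * A - X) * Cperpᴴ)).PosDef) :
    ∃ μ₀ : ℝ, 0 < μ₀ ∧ ∀ μ : ℝ, μ₀ ≤ μ →
      (-(Bperpᴴ * (A * ((μ : ℂ) • Y) * Aᴴ - (μ : ℂ) • Y) * Bperp)).PosDef ∧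
      (-(Cperp * (Aᴴ * ((μ : ℂ) • X) * A - (μ : ℂ) • X) * Cperpᴴ)).PosDef ∧
      (Matrix.fromBlocks ((μ : ℂ) • X) 1 1 ((μ : ℂ) • Y)).PosSemidef := by
  have hLMI : ∀ᶠ μ : ℝ in atTop,
      (-(Bperpᴴ * (A * ((μ : ℂ) • Y) * Aᴴ - (μ : ℂ) • Y) * Bperp)).PosDef ∧
      (-(Cperp * (Aᴴ * ((μ : ℂ) • X) * A - (μ : ℂ) • X) * Cperpᴴ)).PosDef := by
    filter_upwards [eventually_gt_atTop 0] with μ hμ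
    have hμ : (0 : ℂ) < μ := by exact_mod_cast hμ
    simp only [Matrix.mul_smul, Matrix.smul_mul, ← smul_sub, ← smul_neg]
    exact ⟨hLMI_Y.smul hμ, hLMI_X.smul hμ⟩
  have hCoupling : ∀ᶠ μ : ℝ in atTop,
      (Matrix.fromBlocks ((μ : ℂ) • X) 1 1 ((μ : ℂ) • Y)).PosSemidef := by
    filter_upwards [hX.eventually_posSemidef_smul_sub_one, hY.eventually_posSemidef_smul_sub_one]
      with μ hXμ hYμ
    exact posSemidef_fromBlocks_one_one hXμ hYμ
  obtain ⟨μ₀, hμ₀⟩ := eventually_atTop.1 (hLMI.and hCoupling)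
  exact ⟨max μ₀ 1, by positivity, fun μ hμ => and_assoc.1 (hμ₀ μ (le_of_max_le_left hμ))⟩

/-- The coupling condition can be dropped when no rank constraints are imposed:
if `X, Y > 0` satisfy the homogeneous LMIs `B⊥* (A Y A* - Y) B⊥ < 0` and
`C⊥ (A* X A - X) C⊥* < 0`, then for all sufficiently large `μ > 0` the rescalings
`μ X, μ Y` satisfy the same LMIs together with `[[μX, I],[I, μY]] ≥ 0`. -/
theorem coupling_by_rescaling {n p q : ℕ} (A X Y : Matrix (Fin n) (Fin n) ℂ)
    (Bperp : Matrix (Fin n) (Fin p) ℂ) (Cperp : Matrix (Fin q) (Fin n) ℂ)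
    (hB : Function.Injective Bperp.mulVec) (hC : Function.Injective Cperpᴴ.mulVec)
    (hX : X.PosDef) (hY : Y.PosDef)
    (hLMI_Y : (-(Bperpᴴ * (A * Y * Aᴴ - Y) * Bperp)).PosDef)
    (hLMI_X : (-(Cperp * (Aᴴ * X * A - X) * Cperpᴴ)).PosDef) :
    ∃ μ₀ : ℝ, 0 < μ₀ ∧ ∀ μ : ℝ, μ₀ ≤ μ →
      (-(Bperpᴴ * (A * ((μ : ℂ) • Y) * Aᴴ - (μ : ℂ) • Y) * Bperp)).PosDef ∧
      (-(Cperp * (Aᴴ * ((μ : ℂ) • X) * A - (μ : ℂ) • X) * Cperpᴴ)).PosDef ∧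
      (Matrix.fromBlocks ((μ : ℂ) • X) 1 1 ((μ : ℂ) • Y)).PosSemidef :=
  coupling_by_rescaling_general A X Y Bperp Cperp hX hY hLMI_Y hLMI_X
end
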